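/- A polynomial f ∈ ℤ[x_1,...,x_n] is quasisymmetric if and only if T_1(f) = T_2(f) = ... = T_{n-1}(f) = 0, where T_i(f) = (f(x_1,...,x_{i-1},x_i,0,x_{i+1},...,x_{n-1}) − f(x_1,...,x_{i-1},0,x_i,x_{i+1},...,x_{n-1}))/x_i. -/

import Mathlib

/-!
Index the variables from `0` and let `s_m : ℕ → ℕ` be the increasing injection omitting `m`.
The map `R (m+1)` kills `x_m` and renames the other variables along `s_m⁻¹`, so it is
`killCompl` for `s_m`, and the coefficient of `x^d` in `R (m+1) f` is that of `x^(s_m d)` in `f`.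
Since `s_m = (m m+1) ∘ s_{m+1}`, the coefficients of `T (m+1) f` are the differences
`[x^e] f - [x^((m m+1) e)] f`, where `e` runs over the exponents with `e (m+1) = 0 ≠ e m`.
So all `T_i f` vanish iff moving a nonzero exponent to an empty adjacent slot among the first `n`
never changes a coefficient of `f`. Quasisymmetry implies this directly, and conversely such moves
slide any exponent with nonzero entries `a_1, …, a_k` to `x_0^{a_1} ⋯ x_{k-1}^{a_k}`.
-/

open MvPolynomial

/-- The Bergeron–Sottile map `R i` (1-based `i`): set the variable `x_i` to zero
and shift every later variable down by one.  Variables are 0-indexed: `X j`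
represents `x_{j+1}`. -/
noncomputable def R (i : ℕ) : MvPolynomial ℕ ℤ →ₐ[ℤ] MvPolynomial ℕ ℤ :=
  aeval (fun j => if j + 1 < i then X j else if j + 1 = i then 0 else X (j - 1))

/-- The trimming operator `T i = (R (i+1) f - R i f) / x_i` (1-based `i`);
the difference `R (i+1) f - R i f` is always divisible by `x_i = X (i-1)`,
so the exact quotient is computed by `divMonomial`. -/
noncomputable def T (i : ℕ) (f : MvPolynomial ℕ ℤ) : MvPolynomial ℕ ℤ :=
  (R (i + 1) f - R i f).divMonomial (Finsupp.single (i - 1) 1)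

/-- `f` only involves the variables `x_1, …, x_n`. -/
def InVars (n : ℕ) (f : MvPolynomial ℕ ℤ) : Prop :=
  ∀ d ∈ f.support, ∀ j, n ≤ j → d j = 0

/-- `f` is a quasisymmetric polynomial in the variables `x_1, …, x_n`. -/
def IsQSym (n : ℕ) (f : MvPolynomial ℕ ℤ) : Prop :=
  ∀ (k : ℕ) (a : Fin k → ℕ), (∀ l, 1 ≤ a l) →
    ∀ (i j : Fin k → ℕ), StrictMono i → StrictMono j →
      (∀ l, i l < n) → (∀ l, j l < n) →
      coeff (∑ l, Finsupp.single (i l) (a l)) f =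
        coeff (∑ l, Finsupp.single (j l) (a l)) f

namespace Nat

def succAbove (m j : ℕ) : ℕ := if j < m then j else j + 1

theorem succAbove_of_lt {m j : ℕ} (h : j < m) : succAbove m j = j := if_pos h

theorem succAbove_of_le {m j : ℕ} (h : m ≤ j) : succAbove m j = j + 1 := if_neg (not_lt.2 h)

theorem succAbove_injective (m : ℕ) : Function.Injective (succAbove m) := by
  intro a b
  simp only [succAbove]
  split_ifs <;> omega

theorem range_succAbove (m : ℕ) : Set.range (succAbove m) = {m}ᶜ := by
  ext j
  simp only [Set.mem_range, Set.mem_compl_singleton_iff, succAbove]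
  constructor
  · rintro ⟨i, rfl⟩
    split_ifs <;> omega
  · intro h
    rcases lt_or_gt_of_ne h with h | h
    · exact ⟨j, if_pos h⟩
    · exact ⟨j - 1, by rw [if_neg (by omega)]; omega⟩

theorem swap_comp_succAbove_succ (m : ℕ) :
    Equiv.swap m (m + 1) ∘ succAbove (m + 1) = succAbove m := by
  funext j
  simp only [Function.comp_apply, succAbove, Equiv.swap_apply_def]
  split_ifs <;> omega

end Nat

theorem MvPolynomial.killCompl_X {σ τ R : Type*} [CommSemiring R] {f : σ → τ}
    (hf : Function.Injective f) (i : σ) : killCompl (R := R) hf (X (f i)) = X i := by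
  rw [← rename_X, killCompl_rename_app]

theorem R_succ_eq_killCompl (m : ℕ) :
    _root_.R (m + 1) = killCompl (Nat.succAbove_injective m) := by
  refine algHom_ext fun j => ?_
  simp only [_root_.R, aeval_X, add_lt_add_iff_right, add_left_inj]
  rcases lt_trichotomy j m with h | rfl | h
  · conv_rhs => rw [← Nat.succAbove_of_lt h]
    rw [if_pos h, killCompl_X]
  · rw [if_neg (lt_irrefl j), if_pos rfl, killCompl, aeval_X,
      dif_neg (by simp [Nat.range_succAbove])]
  · obtain ⟨j, rfl⟩ := Nat.exists_eq_add_one_of_ne_zero (Nat.ne_zero_of_lt h)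
    conv_rhs => rw [← Nat.succAbove_of_le (Nat.le_of_lt_succ h)]
    rw [if_neg (by omega), if_neg h.ne', killCompl_X, Nat.add_sub_cancel]

theorem coeff_R_succ (m : ℕ) (f : MvPolynomial ℕ ℤ) (d : ℕ →₀ ℕ) :
    coeff d (_root_.R (m + 1) f) = coeff (d.mapDomain (Nat.succAbove m)) f := by
  rw [R_succ_eq_killCompl, coeff_killCompl]

theorem coeff_T_succ (m : ℕ) (f : MvPolynomial ℕ ℤ) (d : ℕ →₀ ℕ) :
    coeff d (T (m + 1) f) =
      coeff ((Finsupp.single m 1 + d).mapDomain (Nat.succAbove (m + 1))) f -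
        coeff (((Finsupp.single m 1 + d).mapDomain (Nat.succAbove (m + 1))).mapDomain
          (Equiv.swap m (m + 1))) f := by
  rw [T, Nat.add_sub_cancel, coeff_divMonomial, coeff_sub, coeff_R_succ, coeff_R_succ,
    ← Finsupp.mapDomain_comp, Nat.swap_comp_succAbove_succ]

theorem exists_mapDomain_succAbove_succ_eq {m : ℕ} {e : ℕ →₀ ℕ} (he : e (m + 1) = 0)
    (hm : e m ≠ 0) : ∃ d, (Finsupp.single m 1 + d).mapDomain (Nat.succAbove (m + 1)) = e := by
  have hsupp : ↑e.support ⊆ Set.range (Nat.succAbove (m + 1)) := by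
    rw [Nat.range_succAbove]
    rintro _ hj rfl
    exact Finsupp.mem_support_iff.1 hj he
  set g := e.comapDomain _ (Nat.succAbove_injective (m + 1)).injOn
  have hg : g m = e m := by
    rw [Finsupp.comapDomain_apply, Nat.succAbove_of_lt m.lt_succ_self]
  refine ⟨g - Finsupp.single m 1, ?_⟩
  rw [add_tsub_cancel_of_le (Finsupp.single_le_iff.2 (by omega)),
    Finsupp.mapDomain_comapDomain _ (Nat.succAbove_injective _) _ hsupp]

theorem T_succ_eq_zero_iff (m : ℕ) (f : MvPolynomial ℕ ℤ) :
    T (m + 1) f = 0 ↔ ∀ e : ℕ →₀ ℕ, e (m + 1) = 0 → e m ≠ 0 →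
      coeff (e.mapDomain (Equiv.swap m (m + 1))) f = coeff e f := by
  simp only [MvPolynomial.ext_iff, coeff_zero, coeff_T_succ, sub_eq_zero]
  constructor
  · intro h e he hm
    obtain ⟨d, rfl⟩ := exists_mapDomain_succAbove_succ_eq he hm
    exact (h d).symm
  · intro h d
    refine (h _ ?_ ?_).symm
    · exact Finsupp.mapDomain_of_notMem_range _ _ (by simp [Nat.range_succAbove])
    · have hm :=
        Finsupp.mapDomain_apply (Nat.succAbove_injective (m + 1)) (Finsupp.single m 1 + d) m
      rw [Nat.succAbove_of_lt m.lt_succ_self] at hm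
      simp [hm]

def IsSlideInvariant (n : ℕ) (f : MvPolynomial ℕ ℤ) : Prop :=
  ∀ m, m + 2 ≤ n → ∀ e : ℕ →₀ ℕ, e (m + 1) = 0 → e m ≠ 0 →
    coeff (e.mapDomain (Equiv.swap m (m + 1))) f = coeff e f

theorem forall_T_eq_zero_iff_isSlideInvariant (n : ℕ) (f : MvPolynomial ℕ ℤ) :
    (∀ i, 1 ≤ i → i + 1 ≤ n → T i f = 0) ↔ IsSlideInvariant n f := by
  constructor
  · exact fun hT m hm => (T_succ_eq_zero_iff m f).1 (hT (m + 1) (by omega) (by omega))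
  · intro hf i hi hin
    obtain ⟨m, rfl⟩ := Nat.exists_eq_add_of_le' hi
    exact (T_succ_eq_zero_iff m f).2 (hf m (by omega))

theorem Fin.val_le_of_strictMono {k : ℕ} {i : Fin k → ℕ} (hi : StrictMono i) (l : Fin k) :
    (l : ℕ) ≤ i l := by
  obtain ⟨l, hl⟩ := l
  induction l with
  | zero => exact Nat.zero_le _
  | succ l ih =>
    have h₁ := hi (show (⟨l, by omega⟩ : Fin k) < ⟨l + 1, hl⟩ from Nat.lt_succ_self l)
    have h₂ : l ≤ i ⟨l, _⟩ := ih (by omega)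
    exact Nat.succ_le_of_lt (h₂.trans_lt h₁)

theorem StrictMono.swap_comp {α : Type*} [Preorder α] {i : α → ℕ} (hi : StrictMono i) {m : ℕ}
    (hm : (∀ a, i a ≠ m) ∨ ∀ a, i a ≠ m + 1) : StrictMono (Equiv.swap m (m + 1) ∘ i) := by
  intro a b hab
  have := hi hab
  simp only [Function.comp_apply, Equiv.swap_apply_def]
  rcases hm with h | h <;> have := h a <;> have := h b <;> split_ifs <;> omega

theorem exists_eq_succ_forall_ne_of_strictMono {k : ℕ} {i : Fin k → ℕ} (hi : StrictMono i)
    (hne : i ≠ Fin.val) : ∃ l m, i l = m + 1 ∧ ∀ l', i l' ≠ m := by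
  by_contra! H
  refine hne (funext fun l => le_antisymm ?_ (Fin.val_le_of_strictMono hi l))
  induction hv : i l using Nat.strong_induction_on generalizing l with
  | _ v ih =>
  rcases v with _ | m
  · exact Nat.zero_le _
  obtain ⟨l', hl'⟩ := H l m hv
  have hlt : (l' : ℕ) < l := hi.lt_iff_lt.1 (by omega)
  have := ih m (by omega) l' hl'
  omega

namespace Finsupp

variable {ι α M : Type*} [Fintype ι] [AddCommMonoid M]

theorem sum_single_apply_of_injective {i : ι → α} (hi : Function.Injective i) (a : ι → M)
    (l : ι) : (∑ l', single (i l') (a l')) (i l) = a l := by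
  rw [finsetSum_apply, Finset.sum_eq_single l (fun b _ hb => by simp [hi.ne hb]) (by simp)]
  simp

theorem sum_single_apply_of_forall_ne {i : ι → α} (a : ι → M) {p : α} (h : ∀ l, i l ≠ p) :
    (∑ l, single (i l) (a l)) p = 0 := by
  simp [finsetSum_apply, h]

theorem mapDomain_sum_single {β : Type*} (σ : α → β) (i : ι → α) (a : ι → M) :
    (∑ l, single (i l) (a l)).mapDomain σ = ∑ l, single (σ (i l)) (a l) := by
  simp [mapDomain_finsetSum]

theorem exists_strictMono_sum_single_eq [LinearOrder α] (e : α →₀ M) :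
    ∃ (k : ℕ) (i : Fin k → α), StrictMono i ∧ Set.range i = e.support ∧
      ∑ l, single (i l) (e (i l)) = e := by
  refine ⟨_, e.support.orderEmbOfFin rfl, (e.support.orderEmbOfFin rfl).strictMono,
    Finset.range_orderEmbOfFin _ _, ?_⟩
  conv_rhs => rw [← sum_single e, Finsupp.sum, ← Finset.map_orderEmbOfFin_univ e.support rfl,
    Finset.sum_map]
  rfl

end Finsupp

theorem InVars.coeff_eq_zero {n : ℕ} {f : MvPolynomial ℕ ℤ} (hf : InVars n f) {e : ℕ →₀ ℕ}
    {j : ℕ} (hj : n ≤ j) (he : e j ≠ 0) : coeff e f = 0 :=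
  notMem_support_iff.1 fun h => he (hf e h j hj)

theorem IsQSym.coeff_mapDomain_swap {n : ℕ} {f : MvPolynomial ℕ ℤ} (hq : IsQSym n f)
    (hf : InVars n f) {m : ℕ} (hm : m + 2 ≤ n) {e : ℕ →₀ ℕ} (he : e (m + 1) = 0) :
    coeff (e.mapDomain (Equiv.swap m (m + 1))) f = coeff e f := by
  by_cases hsupp : ∀ j ∈ e.support, j < n
  · obtain ⟨k, i, hi, hrange, hsum⟩ := e.exists_strictMono_sum_single_eq
    have hmem : ∀ l, i l ∈ e.support := fun l => by
      rw [← Finset.mem_coe, ← hrange]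
      exact Set.mem_range_self l
    have hi_ne : ∀ l, i l ≠ m + 1 := fun l h => Finsupp.mem_support_iff.1 (hmem l) (h ▸ he)
    have hswap_lt : ∀ l, Equiv.swap m (m + 1) (i l) < n := fun l => by
      have := hsupp _ (hmem l)
      have := hi_ne l
      rw [Equiv.swap_apply_def]
      split_ifs <;> omega
    rw [← hsum, Finsupp.mapDomain_sum_single]
    exact hq k (e ∘ i) (fun l => Nat.one_le_iff_ne_zero.2 (Finsupp.mem_support_iff.1 (hmem l)))
      _ i (hi.swap_comp (Or.inr hi_ne)) hi hswap_lt (fun l => hsupp _ (hmem l))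
  · push Not at hsupp
    obtain ⟨j, hj, hjn⟩ := hsupp
    have hfix : Equiv.swap m (m + 1) j = j := Equiv.swap_apply_of_ne_of_ne (by omega) (by omega)
    have hej : e j ≠ 0 := Finsupp.mem_support_iff.1 hj
    refine (hf.coeff_eq_zero hjn ?_).trans (hf.coeff_eq_zero hjn hej).symm
    rwa [← hfix, Finsupp.mapDomain_apply (Equiv.injective _)]

theorem IsSlideInvariant.coeff_sum_single_eq {n : ℕ} {f : MvPolynomial ℕ ℤ}
    (h : IsSlideInvariant n f) {k : ℕ} {a : Fin k → ℕ} (ha : ∀ l, 1 ≤ a l) {i : Fin k → ℕ}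
    (hi : StrictMono i) (hin : ∀ l, i l < n) :
    coeff (∑ l, Finsupp.single (i l) (a l)) f =
      coeff (∑ l : Fin k, Finsupp.single (l : ℕ) (a l)) f := by
  induction hN : ∑ l, i l using Nat.strong_induction_on generalizing i with
  | _ N ih =>
  by_cases hval : i = Fin.val
  · subst hval
    rfl
  obtain ⟨l₀, m, hl₀, hm⟩ := exists_eq_succ_forall_ne_of_strictMono hi hval
  set i' := Equiv.swap m (m + 1) ∘ i with hi'
  have hi'_mono : StrictMono i' := hi.swap_comp (Or.inl hm)
  have hi'_ne : ∀ l, i' l ≠ m + 1 := fun l => by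
    have := hm l
    simp only [hi', Function.comp_apply, Equiv.swap_apply_def]
    split_ifs <;> omega
  have hi'_le : ∀ l, i' l ≤ i l := fun l => by
    have := hm l
    simp only [hi', Function.comp_apply, Equiv.swap_apply_def]
    split_ifs <;> omega
  have hi'l₀ : i' l₀ = m := by simp [hi', hl₀]
  have hi'i : Equiv.swap m (m + 1) ∘ i' = i := by
    funext l
    simp [hi']
  have hsum_lt : ∑ l, i' l < N :=
    hN ▸ Finset.sum_lt_sum (fun l _ => hi'_le l) ⟨l₀, Finset.mem_univ _, by omega⟩
  calc coeff (∑ l, Finsupp.single (i l) (a l)) f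
      = coeff ((∑ l, Finsupp.single (i' l) (a l)).mapDomain (Equiv.swap m (m + 1))) f := by
        rw [Finsupp.mapDomain_sum_single, ← hi'i]
        rfl
    _ = coeff (∑ l, Finsupp.single (i' l) (a l)) f := by
        refine h m (by have := hin l₀; omega) _
          (Finsupp.sum_single_apply_of_forall_ne _ hi'_ne) ?_
        rw [← hi'l₀, Finsupp.sum_single_apply_of_injective hi'_mono.injective]
        exact Nat.one_le_iff_ne_zero.1 (ha l₀)
    _ = _ := ih _ hsum_lt hi'_mono (fun l => (hi'_le l).trans_lt (hin l)) rfl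

theorem IsSlideInvariant.isQSym {n : ℕ} {f : MvPolynomial ℕ ℤ} (h : IsSlideInvariant n f) :
    IsQSym n f := fun _ _ ha i j hi hj hin hjn => by
  rw [h.coeff_sum_single_eq ha hi hin, h.coeff_sum_single_eq ha hj hjn]

/-- `f ∈ ℤ[x_1,…,x_n]` is quasisymmetric iff
`T_1 f = ⋯ = T_{n-1} f = 0`. -/
theorem qsym_iff_T_eq_zero (n : ℕ) (f : MvPolynomial ℕ ℤ) (hf : InVars n f) :
    IsQSym n f ↔ ∀ i, 1 ≤ i → i + 1 ≤ n → T i f = 0 := by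
  rw [forall_T_eq_zero_iff_isSlideInvariant]
  exact ⟨fun hq m hm _ he _ => hq.coeff_mapDomain_swap hf hm he, IsSlideInvariant.isQSym⟩
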